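/- arXiv:2203.12572 — 9 statements merged into one kernel-verified Lean document; each statement's English description precedes it below -/
import Mathlib

section
/- The e-BY procedure controls the false coverage rate at level δ: if for each i ∈ [K], E_i(θ_i) is a nonnegative random variable with E[E_i(θ_i)] ≤ 1, and S ⊆ [K] is an arbitrary (possibly data-dependent) random selection set, then E[ (Σ_{i∈S} 1{E_i(θ_i) ≥ K/(δ|S|)}) / max(|S|,1) ] ≤ δ for any δ ∈ (0,1). -/
open MeasureTheory ENNReal
open scoped ENNReal Classical

/-- The e-BY procedure controls the false coverage rate at level δ: for e-values
`E i` (nonnegative, expectation at most 1) and an arbitrary (possibly data-dependent)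
selection `S`, the expected proportion of selected indices `i` whose e-value exceeds
`K/(δ|S|)` (i.e., whose level-`δ|S|/K` e-CI fails to cover `θ_i`) is at most `δ`. -/
theorem eBY_FCR_control {Ω : Type*} [MeasurableSpace Ω]
    (μ : Measure Ω) [IsProbabilityMeasure μ]
    (K : ℕ) (hK : 0 < K)
    (δ : ℝ≥0∞) (hδ0 : 0 < δ) (hδ1 : δ < 1)
    (E : Fin K → Ω → ℝ≥0∞)
    (hmeas : ∀ i, Measurable (E i))
    (hE : ∀ i, ∫⁻ ω, E i ω ∂μ ≤ 1)
    (S : Ω → Finset (Fin K)) :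
    ∫⁻ ω, (∑ i ∈ S ω, if (K : ℝ≥0∞) / (δ * ((S ω).card : ℝ≥0∞)) ≤ E i ω then 1 else 0)
        / max ((S ω).card : ℝ≥0∞) 1 ∂μ ≤ δ := by
  have hKne : (K : ℝ≥0∞) ≠ 0 := Nat.cast_ne_zero.mpr hK.ne'
  have hKtop : (K : ℝ≥0∞) ≠ ⊤ := natCast_ne_top K
  have hδtop : δ ≠ ⊤ := (hδ1.trans one_lt_top).ne
  have hδne : δ ≠ 0 := hδ0.ne'
  calc ∫⁻ ω, (∑ i ∈ S ω, if (K : ℝ≥0∞) / (δ * ((S ω).card : ℝ≥0∞)) ≤ E i ω then 1 else 0)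
        / max ((S ω).card : ℝ≥0∞) 1 ∂μ
      ≤ ∫⁻ ω, ∑ i : Fin K, δ / K * E i ω ∂μ := by
        apply lintegral_mono
        intro ω
        dsimp only
        rcases Nat.eq_zero_or_pos (S ω).card with hc | hc
        · rw [Finset.card_eq_zero.mp hc]
          simp
        · have hc1 : (1 : ℝ≥0∞) ≤ ((S ω).card : ℝ≥0∞) := by
            exact_mod_cast hc
          have hcne : ((S ω).card : ℝ≥0∞) ≠ 0 := by positivity
          have hctop : ((S ω).card : ℝ≥0∞) ≠ ⊤ := natCast_ne_top _
          rw [max_eq_left hc1, div_eq_mul_inv, Finset.sum_mul]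
          simp only [← div_eq_mul_inv]
          refine le_trans (Finset.sum_le_sum ?_)
            (Finset.sum_le_sum_of_subset ((S ω).subset_univ))
          intro i hi
          by_cases h : (K : ℝ≥0∞) / (δ * ((S ω).card : ℝ≥0∞)) ≤ E i ω
          · rw [if_pos h]
            have hmul : (K : ℝ≥0∞) ≤ E i ω * (δ * ((S ω).card : ℝ≥0∞)) :=
              (ENNReal.div_le_iff (mul_ne_zero hδne hcne)
                (ENNReal.mul_ne_top hδtop hctop)).mp h
            rw [ENNReal.div_le_iff hcne hctop, div_eq_mul_inv]
            have h2 : δ * (↑K)⁻¹ * E i ω * ↑(S ω).card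
                = E i ω * (δ * ↑(S ω).card) * (↑K)⁻¹ := by ring
            rw [h2, ← div_eq_mul_inv,
              ENNReal.le_div_iff_mul_le (Or.inl hKne) (Or.inl hKtop), one_mul]
            exact hmul
          · rw [if_neg h, ENNReal.zero_div]
            exact zero_le
    _ = ∑ i : Fin K, δ / K * ∫⁻ ω, E i ω ∂μ := by
        rw [lintegral_finset_sum _ (fun i _ => Measurable.const_mul (hmeas i) _)]
        exact Finset.sum_congr rfl fun i _ => lintegral_const_mul _ (hmeas i)
    _ ≤ ∑ i : Fin K, δ / K := by
        refine Finset.sum_le_sum fun i _ => ?_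
        calc δ / K * ∫⁻ ω, E i ω ∂μ ≤ δ / K * 1 := by
              exact mul_le_mul_right (hE i) _
          _ = δ / K := mul_one _
    _ = δ := by
        rw [Finset.sum_const, Finset.card_univ, Fintype.card_fin, nsmul_eq_mul]
        rw [mul_comm, ENNReal.div_mul_cancel hKne hKtop]
end

section
/- The weighted e-BY procedure controls the FCR at level δ: if w_1,...,w_K are nonnegative weights summing to at most K, each E_i(θ_i) is a nonnegative random variable with expectation at most 1, and S ⊆ [K] is any random selection, then E[ (Σ_{i∈S} 1{E_i(θ_i) ≥ K/(w_i δ |S|)}) / max(|S|,1) ] ≤ δ. -/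
open MeasureTheory ENNReal
open scoped ENNReal Classical

/-- The weighted e-BY procedure controls the FCR at level δ: with nonnegative weights
`w i` summing to at most `K`, e-values `E i` and an arbitrary random selection `S`,
the expected proportion of selected indices whose e-value exceeds `K/(w_i δ |S|)`
(i.e., miscoverage of the reported `1 - w_i δ |S| / K` e-CI) is at most `δ`. -/
theorem weighted_eBY_FCR_control {Ω : Type*} [MeasurableSpace Ω]
    (μ : Measure Ω) [IsProbabilityMeasure μ]
    (K : ℕ) (hK : 0 < K)
    (δ : ℝ≥0∞) (hδ0 : 0 < δ) (hδ1 : δ < 1)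
    (w : Fin K → ℝ≥0∞) (hw : ∑ i, w i ≤ (K : ℝ≥0∞))
    (E : Fin K → Ω → ℝ≥0∞)
    (hmeas : ∀ i, Measurable (E i))
    (hE : ∀ i, ∫⁻ ω, E i ω ∂μ ≤ 1)
    (S : Ω → Finset (Fin K)) :
    ∫⁻ ω, (∑ i ∈ S ω, if (K : ℝ≥0∞) / (w i * δ * ((S ω).card : ℝ≥0∞)) ≤ E i ω then 1 else 0)
        / max ((S ω).card : ℝ≥0∞) 1 ∂μ ≤ δ := by
  classical
  have hK0 : (K : ℝ≥0∞) ≠ 0 := by exact_mod_cast hK.ne'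
  have hKtop : (K : ℝ≥0∞) ≠ ∞ := ENNReal.natCast_ne_top K
  have hdtop : δ ≠ ∞ := (hδ1.trans_le le_top).ne
  -- a.e. pointwise bound
  have hae : ∀ᵐ ω ∂μ,
      (∑ i ∈ S ω, if (K : ℝ≥0∞) / (w i * δ * ((S ω).card : ℝ≥0∞)) ≤ E i ω then 1 else 0)
        / max ((S ω).card : ℝ≥0∞) 1 ≤ ∑ i : Fin K, (w i * δ / K) * E i ω := by
    have hfin : ∀ᵐ ω ∂μ, ∀ i, E i ω ≠ ∞ := by
      rw [ae_all_iff]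
      intro i
      have : ∀ᵐ ω ∂μ, E i ω < ∞ :=
        ae_lt_top (hmeas i) ((hE i).trans_lt ENNReal.one_lt_top).ne
      exact this.mono fun ω h => h.ne
    filter_upwards [hfin] with ω hω
    rw [div_eq_mul_inv, Finset.sum_mul]
    simp only [← div_eq_mul_inv]
    refine le_trans (Finset.sum_le_sum ?_)
      (Finset.sum_le_sum_of_subset_of_nonneg (Finset.subset_univ _)
        (fun i _ _ => zero_le))
    intro i hi
    split_ifs with h
    · have hcard : 0 < (S ω).card := Finset.card_pos.mpr ⟨i, hi⟩
      have hc1 : (1 : ℝ≥0∞) ≤ ((S ω).card : ℝ≥0∞) := by exact_mod_cast hcard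
      rw [max_eq_left hc1]
      set n : ℝ≥0∞ := ((S ω).card : ℝ≥0∞) with hn
      have hn0 : n ≠ 0 := by positivity
      have hntop : n ≠ ∞ := ENNReal.natCast_ne_top _
      have hwdn0 : w i * δ * n ≠ 0 := by
        intro h0
        rw [h0, ENNReal.div_zero hK0] at h
        exact hω i (top_le_iff.mp h)
      have hwitop : w i ≠ ∞ := by
        refine ((le_trans ?_ hw).trans_lt (ENNReal.natCast_lt_top K)).ne
        exact Finset.single_le_sum (fun j _ => zero_le) (Finset.mem_univ i)
      have hwdntop : w i * δ * n ≠ ∞ :=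
        ENNReal.mul_ne_top (ENNReal.mul_ne_top hwitop hdtop) hntop
      rw [ENNReal.div_le_iff hwdn0 hwdntop] at h
      rw [ENNReal.div_le_iff hn0 hntop]
      have key : w i * δ / ↑K * E i ω * n = E i ω * (w i * δ * n) / ↑K := by
        rw [div_eq_mul_inv, div_eq_mul_inv]; ring
      calc (1 : ℝ≥0∞) = (K : ℝ≥0∞) / K := (ENNReal.div_self hK0 hKtop).symm
        _ ≤ E i ω * (w i * δ * n) / K := ENNReal.div_le_div_right h _
        _ = w i * δ / ↑K * E i ω * n := key.symm
    · simp [ENNReal.zero_div]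
  calc ∫⁻ ω, (∑ i ∈ S ω, if (K : ℝ≥0∞) / (w i * δ * ((S ω).card : ℝ≥0∞)) ≤ E i ω then 1 else 0)
        / max ((S ω).card : ℝ≥0∞) 1 ∂μ
      ≤ ∫⁻ ω, ∑ i : Fin K, (w i * δ / K) * E i ω ∂μ := lintegral_mono_ae hae
    _ = ∑ i : Fin K, ∫⁻ ω, (w i * δ / K) * E i ω ∂μ :=
        lintegral_finset_sum _ (fun i _ => ((hmeas i).const_mul _))
    _ = ∑ i : Fin K, (w i * δ / K) * ∫⁻ ω, E i ω ∂μ := by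
        refine Finset.sum_congr rfl fun i _ => ?_
        exact lintegral_const_mul _ (hmeas i)
    _ ≤ ∑ i : Fin K, (w i * δ / K) * 1 := by
        refine Finset.sum_le_sum fun i _ => ?_
        exact mul_le_mul_right (hE i) _
    _ = (∑ i : Fin K, w i) * δ * (K : ℝ≥0∞)⁻¹ := by
        simp only [mul_one, div_eq_mul_inv, Finset.sum_mul]
    _ ≤ (K : ℝ≥0∞) * δ * (K : ℝ≥0∞)⁻¹ := by gcongr
    _ = δ * ((K : ℝ≥0∞) * (K : ℝ≥0∞)⁻¹) := by ring
    _ = δ := by rw [ENNReal.mul_inv_cancel hK0 hKtop, mul_one]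
end

section
/- If f is a calibrator and P is a p-value for a family of distributions, then f(P) is an e-value for that family: for every distribution Q in the family, E_Q[f(P)] ≤ 1. -/
open MeasureTheory ENNReal
open scoped ENNReal

lemma meas_lt_eq (c : ℝ≥0∞) :
    (volume.restrict (Set.Ioi (0:ℝ))) {t | ENNReal.ofReal t < c} = c := by
  rw [Measure.restrict_apply' measurableSet_Ioi]
  rcases eq_or_ne c ∞ with rfl | hc
  · have h : {t : ℝ | ENNReal.ofReal t < ∞} ∩ Set.Ioi 0 = Set.Ioi 0 := by
      ext t; simp [ofReal_lt_top]
    rw [h]; simp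
  · have h : {t : ℝ | ENNReal.ofReal t < c} ∩ Set.Ioi 0 = Set.Ioo 0 c.toReal := by
      ext t
      simp only [Set.mem_inter_iff, Set.mem_setOf_eq, Set.mem_Ioi, Set.mem_Ioo]
      constructor
      · rintro ⟨h1, h2⟩
        exact ⟨h2, (ENNReal.ofReal_lt_iff_lt_toReal h2.le hc).mp h1⟩
      · rintro ⟨h1, h2⟩
        exact ⟨(ENNReal.ofReal_lt_iff_lt_toReal h1.le hc).mpr h2, h1⟩
    rw [h, Real.volume_Ioo, sub_zero, ENNReal.ofReal_toReal hc]

lemma layercake' {α : Type*} [MeasurableSpace α] (μ : Measure α) [SFinite μ]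
    (g : α → ℝ≥0∞) (hg : Measurable g) :
    ∫⁻ a, g a ∂μ = ∫⁻ t in Set.Ioi (0:ℝ), μ {a | ENNReal.ofReal t < g a} := by
  have hS : MeasurableSet {p : α × ℝ | ENNReal.ofReal p.2 < g p.1} :=
    measurableSet_lt (ENNReal.measurable_ofReal.comp measurable_snd) (hg.comp measurable_fst)
  have hmeas : AEMeasurable (Function.uncurry fun (a : α) (t : ℝ) =>
      Set.indicator {t : ℝ | ENNReal.ofReal t < g a} (1 : ℝ → ℝ≥0∞) t)
      (μ.prod (volume.restrict (Set.Ioi (0:ℝ)))) := by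
    have heq : (Function.uncurry fun (a : α) (t : ℝ) => Set.indicator {t : ℝ | ENNReal.ofReal t < g a} (1 : ℝ → ℝ≥0∞) t)
        = Set.indicator {p : α × ℝ | ENNReal.ofReal p.2 < g p.1} (1 : α × ℝ → ℝ≥0∞) := by
      funext p; simp [Function.uncurry, Set.indicator_apply]
    rw [heq]
    exact ((measurable_one.indicator hS)).aemeasurable
  calc ∫⁻ a, g a ∂μ
      = ∫⁻ a, (∫⁻ t in Set.Ioi (0:ℝ),
          Set.indicator {t : ℝ | ENNReal.ofReal t < g a} (1 : ℝ → ℝ≥0∞) t) ∂μ := by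
        refine lintegral_congr fun a => ?_
        rw [lintegral_indicator_one
          (measurableSet_lt ENNReal.measurable_ofReal measurable_const), meas_lt_eq]
    _ = ∫⁻ t in Set.Ioi (0:ℝ), ∫⁻ a,
          Set.indicator {t : ℝ | ENNReal.ofReal t < g a} (1 : ℝ → ℝ≥0∞) t ∂μ :=
        lintegral_lintegral_swap hmeas
    _ = ∫⁻ t in Set.Ioi (0:ℝ), μ {a | ENNReal.ofReal t < g a} := by
        refine setLIntegral_congr_fun measurableSet_Ioi
          (fun ⦃t⦄ _ => ?_)
        have heq : (fun a => Set.indicator {s : ℝ | ENNReal.ofReal s < g a} (1 : ℝ → ℝ≥0∞) t)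
            = Set.indicator {a | ENNReal.ofReal t < g a} (1 : α → ℝ≥0∞) := by
          funext a; simp [Set.indicator_apply]
        rw [heq, lintegral_indicator_one (measurableSet_lt measurable_const hg)]

/-- If `f` is a calibrator (nonincreasing on `[0,1]` with `∫_0^1 f ≤ 1`) and `P` is a
p-value for the distribution `μ` (i.e. `μ(P ≤ α) ≤ α` for all `α ∈ [0,1]`), then `f(P)`
is an e-value: `E_μ[f(P)] ≤ 1`. -/
theorem calibrated_pvalue_is_evalue {Ω : Type*} [MeasurableSpace Ω]
    (μ : Measure Ω) [IsProbabilityMeasure μ]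
    (f : ℝ → ℝ≥0∞)
    (hf_anti : AntitoneOn f (Set.Icc 0 1))
    (hf_int : ∫⁻ x in Set.Icc (0 : ℝ) 1, f x ≤ 1)
    (P : Ω → ℝ) (hPmeas : Measurable P)
    (hPrange : ∀ ω, P ω ∈ Set.Icc (0 : ℝ) 1)
    (hP : ∀ α ∈ Set.Icc (0 : ℝ) 1, μ {ω | P ω ≤ α} ≤ ENNReal.ofReal α) :
    ∫⁻ ω, f (P ω) ∂μ ≤ 1 := by
  set F : ℝ → ℝ≥0∞ := fun x => f (max 0 (min x 1)) with hF_def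
  have hclamp : ∀ x : ℝ, max 0 (min x 1) ∈ Set.Icc (0:ℝ) 1 := fun x =>
    ⟨le_max_left _ _, max_le zero_le_one (min_le_right _ _)⟩
  have hF_anti : Antitone F := by
    intro x y hxy
    exact hf_anti (hclamp x) (hclamp y)
      (max_le_max le_rfl (min_le_min hxy le_rfl))
  have hF_meas : Measurable F := hF_anti.measurable
  have hF_eq : ∀ x ∈ Set.Icc (0:ℝ) 1, F x = f x := by
    intro x hx
    simp only [hF_def]
    rw [min_eq_left hx.2, max_eq_right hx.1]
  -- key comparison of superlevel measures
  have hcomp : ∀ t : ℝ, μ {ω | ENNReal.ofReal t < F (P ω)}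
      ≤ (volume.restrict (Set.Icc (0:ℝ) 1)) {x | ENNReal.ofReal t < F x} := by
    intro t
    set A := {x : ℝ | ENNReal.ofReal t < F x} ∩ Set.Icc (0:ℝ) 1 with hA_def
    have hrhs : (volume.restrict (Set.Icc (0:ℝ) 1)) {x | ENNReal.ofReal t < F x}
        = volume A := Measure.restrict_apply' measurableSet_Icc
    rw [hrhs]
    by_cases hA : A.Nonempty
    · have hbdd : BddAbove A := ⟨1, fun x hx => hx.2.2⟩
      set a := sSup A with ha_def
      have ha1 : a ≤ 1 := csSup_le hA fun x hx => hx.2.2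
      have ha0 : 0 ≤ a := le_trans hA.choose_spec.2.1 (le_csSup hbdd hA.choose_spec)
      have h1 : μ {ω | ENNReal.ofReal t < F (P ω)} ≤ μ {ω | P ω ≤ a} := by
        refine measure_mono fun ω hω => ?_
        exact le_csSup hbdd ⟨hω, hPrange ω⟩
      have h2 : μ {ω | P ω ≤ a} ≤ ENNReal.ofReal a := hP a ⟨ha0, ha1⟩
      have h3 : ENNReal.ofReal a ≤ volume A := by
        have hsub : Set.Ico 0 a ⊆ A := by
          intro x hx
          obtain ⟨y, hyA, hxy⟩ := exists_lt_of_lt_csSup hA hx.2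
          refine ⟨lt_of_lt_of_le hyA.1 (hF_anti hxy.le), hx.1, (hx.2.trans_le ha1).le⟩
        calc ENNReal.ofReal a = volume (Set.Ico 0 a) := by
              rw [Real.volume_Ico, sub_zero]
          _ ≤ volume A := measure_mono hsub
      exact (h1.trans h2).trans h3
    · have : {ω | ENNReal.ofReal t < F (P ω)} = ∅ := by
        ext ω
        simp only [Set.mem_setOf_eq, Set.mem_empty_iff_false, iff_false]
        intro hω
        exact hA ⟨P ω, hω, hPrange ω⟩
      rw [this]; simp
  calc ∫⁻ ω, f (P ω) ∂μ
      = ∫⁻ ω, F (P ω) ∂μ :=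
        lintegral_congr fun ω => (hF_eq _ (hPrange ω)).symm
    _ = ∫⁻ t in Set.Ioi (0:ℝ), μ {ω | ENNReal.ofReal t < F (P ω)} :=
        layercake' μ (fun ω => F (P ω)) (hF_meas.comp hPmeas)
    _ ≤ ∫⁻ t in Set.Ioi (0:ℝ),
          (volume.restrict (Set.Icc (0:ℝ) 1)) {x | ENNReal.ofReal t < F x} :=
        lintegral_mono fun t => hcomp t
    _ = ∫⁻ x in Set.Icc (0:ℝ) 1, F x := (layercake' _ F hF_meas).symm
    _ = ∫⁻ x in Set.Icc (0:ℝ) 1, f x :=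
        setLIntegral_congr_fun measurableSet_Icc
          (fun ⦃x⦄ hx => hF_eq x hx)
    _ ≤ 1 := hf_int
end

section
/- A set-valued function C : [0,1] → 2^Θ can be realized as an e-CI (i.e., there exists a family of e-values E(θ) with C(α) = {θ : E(θ) < 1/α} for all α ∈ [0,1)) if and only if C is nonincreasing (α ≤ β implies C(β) ⊆ C(α)) and continuous from above (C(α) = ⋃_{β > α} C(β) for all α ∈ [0,1)). -/
/-!
Realized e-values are monotone in the level: `x < (ofReal α)⁻¹` is an open, downward closed
condition on `α`, which gives monotonicity and continuity from above. Conversely, such a `C`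
is determined by the level `s θ` at which `θ` leaves it, `θ ∈ C α ↔ α < s θ`. Following the
paper, take `U` uniform on `[0, 1]` and `E θ = (s θ)⁻¹ · 1{U ≤ s θ}`: its mean is
`(s θ)⁻¹ · s θ ≤ 1`, and at the outcome `U = 0` it equals `(s θ)⁻¹`, which realizes `C`.
-/

open MeasureTheory ENNReal Set

namespace EConfidenceSet

section Necessity

lemma lt_inv_ofReal_of_le {x : ℝ≥0∞} {a b : ℝ} (hab : a ≤ b) (hb : x < (ENNReal.ofReal b)⁻¹) :
    x < (ENNReal.ofReal a)⁻¹ :=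
  hb.trans_le (ENNReal.inv_le_inv.2 (ENNReal.ofReal_le_ofReal hab))

lemma exists_mem_Ioo_lt_inv_ofReal {x : ℝ≥0∞} {a : ℝ} (ha : a < 1)
    (hx : x < (ENNReal.ofReal a)⁻¹) : ∃ b ∈ Ioo a 1, x < (ENNReal.ofReal b)⁻¹ := by
  have hlt : ENNReal.ofReal a < min x⁻¹ 1 :=
    lt_min (ENNReal.lt_inv_iff_lt_inv.1 hx) (ENNReal.ofReal_lt_one.2 ha)
  obtain ⟨b, -, hab, hb⟩ := ENNReal.lt_iff_exists_real_btwn.1 hlt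
  refine ⟨b, ⟨(ENNReal.ofReal_lt_ofReal_iff'.1 hab).1, ?_⟩, ?_⟩
  · exact ENNReal.ofReal_lt_one.1 (hb.trans_le (min_le_right _ _))
  · exact ENNReal.lt_inv_iff_lt_inv.1 (hb.trans_le (min_le_left _ _))

variable {Θ : Type*} {C : ℝ → Set Θ} {f : Θ → ℝ≥0∞}

lemma antitone_of_realizes (hC : ∀ α : ℝ, 0 ≤ α → α < 1 → C α = {θ | f θ < (ENNReal.ofReal α)⁻¹})
    (a b : ℝ) (ha : 0 ≤ a) (hab : a ≤ b) (hb : b < 1) : C b ⊆ C a := by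
  rw [hC a ha (hab.trans_lt hb), hC b (ha.trans hab) hb]
  exact fun θ => lt_inv_ofReal_of_le hab

lemma eq_biUnion_Ioo_of_realizes
    (hC : ∀ α : ℝ, 0 ≤ α → α < 1 → C α = {θ | f θ < (ENNReal.ofReal α)⁻¹})
    (a : ℝ) (ha : 0 ≤ a) (ha1 : a < 1) : C a = ⋃ b ∈ Ioo a 1, C b := by
  refine Subset.antisymm (fun θ hθ => ?_) (iUnion₂_subset fun b hb =>
    antitone_of_realizes hC a b ha hb.1.le hb.2)
  rw [hC a ha ha1] at hθ
  obtain ⟨b, hb, hθb⟩ := exists_mem_Ioo_lt_inv_ofReal ha1 hθ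
  have hθCb : θ ∈ C b := by rw [hC b (ha.trans hb.1.le) hb.2]; exact hθb
  exact mem_biUnion hb hθCb

end Necessity

section Sufficiency

variable {Θ : Type*}

noncomputable def exitLevel (C : ℝ → Set Θ) (θ : Θ) : ℝ :=
  sSup {α | α ∈ Ico (0 : ℝ) 1 ∧ θ ∈ C α}

lemma exitLevel_nonneg (C : ℝ → Set Θ) (θ : Θ) : 0 ≤ exitLevel C θ :=
  Real.sSup_nonneg fun _ hα => hα.1.1

lemma mem_iff_lt_exitLevel {C : ℝ → Set Θ}
    (hmono : ∀ a b : ℝ, 0 ≤ a → a ≤ b → b < 1 → C b ⊆ C a)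
    (hcont : ∀ a : ℝ, 0 ≤ a → a < 1 → C a = ⋃ b ∈ Ioo a 1, C b)
    {θ : Θ} {α : ℝ} (hα : 0 ≤ α) (hα1 : α < 1) : θ ∈ C α ↔ α < exitLevel C θ := by
  rw [exitLevel]
  set S := {α | α ∈ Ico (0 : ℝ) 1 ∧ θ ∈ C α}
  have hbdd : BddAbove S := ⟨1, fun _ hβ => hβ.1.2.le⟩
  constructor
  · intro hθ
    rw [hcont α hα hα1] at hθ
    obtain ⟨b, hb, hθb⟩ := mem_iUnion₂.1 hθ
    exact hb.1.trans_le (le_csSup hbdd ⟨⟨hα.trans hb.1.le, hb.2⟩, hθb⟩)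
  · intro hlt
    rcases S.eq_empty_or_nonempty with hS | hS
    · rw [hS, Real.sSup_empty] at hlt
      exact absurd hlt hα.not_gt
    obtain ⟨b, hb, hαb⟩ := exists_lt_of_lt_csSup hS hlt
    exact hmono α b hα hαb.le hb.1.2 hb.2

noncomputable def levelEValue (s : ℝ) : ℝ → ℝ≥0∞ :=
  (Iic s).indicator fun _ => (ENNReal.ofReal s)⁻¹

lemma lintegral_levelEValue_le_one (s : ℝ) :
    ∫⁻ u, levelEValue s u ∂(volume.restrict (Icc 0 1)) ≤ 1 := by
  rw [levelEValue, lintegral_indicator_const measurableSet_Iic,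
    Measure.restrict_apply measurableSet_Iic]
  calc (ENNReal.ofReal s)⁻¹ * volume (Iic s ∩ Icc 0 1)
      ≤ (ENNReal.ofReal s)⁻¹ * volume (Icc 0 s) := by
        gcongr; exact fun u hu => ⟨hu.2.1, hu.1⟩
    _ = (ENNReal.ofReal s)⁻¹ * ENNReal.ofReal s := by rw [Real.volume_Icc, sub_zero]
    _ ≤ 1 := ENNReal.inv_mul_le_one _

lemma levelEValue_zero {s : ℝ} (hs : 0 ≤ s) : levelEValue s 0 = (ENNReal.ofReal s)⁻¹ :=
  indicator_of_mem (mem_Iic.2 hs) _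

lemma inv_ofReal_lt_inv_ofReal_iff {a b : ℝ} (ha : 0 ≤ a) :
    (ENNReal.ofReal b)⁻¹ < (ENNReal.ofReal a)⁻¹ ↔ a < b := by
  rw [ENNReal.inv_lt_inv, ENNReal.ofReal_lt_ofReal_iff']
  exact and_iff_left_of_imp ha.trans_lt

end Sufficiency

end EConfidenceSet

open EConfidenceSet in
/-- A set-valued function `C : [0,1] → 2^Θ` is realizable as an e-CI (there is a family
of e-values `E θ` — nonnegative with expectation at most 1 under each parameter — and a
possible outcome `ω` with `C α = {θ : E θ ω < 1/α}` for all `α ∈ [0,1)`) if and only if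
`C` is nonincreasing and continuous from above. -/
theorem eCI_realizable_iff {Θ : Type*} (C : ℝ → Set Θ) :
    (∃ (Ω : Type) (_ : MeasurableSpace Ω) (P : Θ → Measure Ω)
        (_ : ∀ θ, IsProbabilityMeasure (P θ)) (E : Θ → Ω → ℝ≥0∞),
        (∀ θ, ∫⁻ ω, E θ ω ∂(P θ) ≤ 1) ∧
        ∃ ω : Ω, ∀ α : ℝ, 0 ≤ α → α < 1 →
          C α = {θ | E θ ω < (ENNReal.ofReal α)⁻¹})
    ↔ ((∀ a b : ℝ, 0 ≤ a → a ≤ b → b < 1 → C b ⊆ C a) ∧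
        (∀ a : ℝ, 0 ≤ a → a < 1 → C a = ⋃ b ∈ Set.Ioo a 1, C b)) := by
  constructor
  · rintro ⟨Ω, _, P, _, E, -, ω, hω⟩
    exact ⟨antitone_of_realizes hω, eq_biUnion_Ioo_of_realizes hω⟩
  · rintro ⟨hmono, hcont⟩
    refine ⟨ℝ, inferInstance, fun _ => volume.restrict (Icc 0 1), fun _ => ⟨by simp⟩,
      fun θ => levelEValue (exitLevel C θ), fun _ => lintegral_levelEValue_le_one _, 0,
      fun α hα hα1 => ?_⟩
    ext θ
    change θ ∈ C α ↔ levelEValue (exitLevel C θ) 0 < (ENNReal.ofReal α)⁻¹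
    rw [levelEValue_zero (exitLevel_nonneg C θ), inv_ofReal_lt_inv_ofReal_iff hα,
      mem_iff_lt_exitLevel hmono hcont hα hα1]
end

section
/- For a nonincreasing, continuous-from-above set function C : [0,1] → 2^Θ, defining t(θ) = sup{1/α : α ∈ [0,1), θ ∉ C(α)} (with sup ∅ = 1), the following equivalence holds for all θ ∈ Θ and α ∈ [0,1): t(θ) < 1/α if and only if θ ∈ C(α). -/
open scoped ENNReal

/-!
If `θ ∉ C α`, then `1/α` is one of the values in the supremum, so `1/α ≤ t(θ)`.
Conversely, if `θ ∈ C α`, continuity from above yields `β > α` with `θ ∈ C β`; by monotonicity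
every level excluding `θ` is at least `β`, so `t(θ) ≤ 1/β < 1/α`.
-/

section

variable {Θ : Type*} (C : ℝ → Set Θ) (θ : Θ)

noncomputable def exclusionSup : ℝ≥0∞ :=
  sSup (insert 1 {x | ∃ a : ℝ, 0 ≤ a ∧ a < 1 ∧ θ ∉ C a ∧ x = (ENNReal.ofReal a)⁻¹})

variable {C θ}

lemma inv_le_exclusionSup {a : ℝ} (ha : 0 ≤ a) (ha1 : a < 1) (hθ : θ ∉ C a) :
    (ENNReal.ofReal a)⁻¹ ≤ exclusionSup C θ :=
  le_sSup (Set.mem_insert_of_mem _ ⟨a, ha, ha1, hθ, rfl⟩)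

lemma exclusionSup_le_inv_of_mem (hC : AntitoneOn C (Set.Ico 0 1)) {b : ℝ} (hb : 0 ≤ b)
    (hb1 : b < 1) (hθ : θ ∈ C b) : exclusionSup C θ ≤ (ENNReal.ofReal b)⁻¹ := by
  refine sSup_le ?_
  rintro x (rfl | ⟨a, ha, ha1, hθa, rfl⟩)
  · exact ENNReal.one_le_inv.2 (ENNReal.ofReal_le_one.2 hb1.le)
  · have hba : b ≤ a := by
      by_contra! hab
      exact hθa (hC ⟨ha, ha1⟩ ⟨hb, hb1⟩ hab.le hθ)
    exact ENNReal.inv_le_inv.2 (ENNReal.ofReal_le_ofReal hba)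

end

/-- For a nonincreasing, continuous-from-above set function `C : [0,1] → 2^Θ`, defining
`t(θ) = sup ({1/α : α ∈ [0,1), θ ∉ C α} ∪ {1})` (so that `sup ∅ = 1`), one has the
equivalence `t(θ) < 1/α ↔ θ ∈ C α` for all `θ` and `α ∈ [0,1)`. -/
theorem t_lt_inv_iff_mem {Θ : Type*} (C : ℝ → Set Θ)
    (hC_anti : ∀ a b : ℝ, 0 ≤ a → a ≤ b → b < 1 → C b ⊆ C a)
    (hC_cont : ∀ a : ℝ, 0 ≤ a → a < 1 → C a = ⋃ b ∈ Set.Ioo a 1, C b)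
    (t : Θ → ℝ≥0∞)
    (ht : ∀ θ, t θ =
      sSup (insert 1 {x | ∃ a : ℝ, 0 ≤ a ∧ a < 1 ∧ θ ∉ C a ∧ x = (ENNReal.ofReal a)⁻¹})) :
    ∀ (θ : Θ) (a : ℝ), 0 ≤ a → a < 1 →
      (t θ < (ENNReal.ofReal a)⁻¹ ↔ θ ∈ C a) := by
  intro θ a ha ha1
  have hanti : AntitoneOn C (Set.Ico 0 1) := fun x hx y hy hxy => hC_anti x y hx.1 hxy hy.2
  rw [ht θ, ← exclusionSup]
  constructor
  · contrapose!
    exact inv_le_exclusionSup ha ha1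
  · intro hmem
    obtain ⟨b, ⟨hab, hb1⟩, hθb⟩ := Set.mem_iUnion₂.1 (hC_cont a ha ha1 ▸ hmem)
    calc exclusionSup C θ ≤ (ENNReal.ofReal b)⁻¹ :=
          exclusionSup_le_inv_of_mem hanti (ha.trans hab.le) hb1 hθb
      _ < (ENNReal.ofReal a)⁻¹ :=
          ENNReal.inv_lt_inv.2 ((ENNReal.ofReal_lt_ofReal_iff (ha.trans_lt hab)).2 hab)
end

section
/- The function f(μ,a,b) = 1 − e^{−μb}·sinh(|μ|a)/sinh(|μ|(a+b)) is increasing in μ ∈ ℝ \ {0} for fixed a, b > 0. -/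
open Real

lemma core (β γ x : ℝ) (hβ : 0 < β) (hβγ : β < γ) (hx : x ≠ 0) :
    γ * exp (-(β*x)) < (γ - β) + β * exp (-(γ*x)) := by
  have hγ : 0 < γ := hβ.trans hβγ
  have h1 : (0:ℝ) < 1 - β/γ := by
    rw [sub_pos, div_lt_one hγ]; exact hβγ
  have h2 : (0:ℝ) < β/γ := by positivity
  have h3 : (1 - β/γ) + β/γ = 1 := by ring
  have h := strictConvexOn_exp.2 (Set.mem_univ (0:ℝ)) (Set.mem_univ (-(γ*x)))
    (by intro h; exact hx (by simpa [hγ.ne'] using h.symm)) h1 h2 h3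
  simp only [smul_eq_mul, mul_zero, zero_add, exp_zero, mul_one] at h
  have harg : β/γ * -(γ*x) = -(β*x) := by field_simp
  rw [harg] at h
  have := mul_lt_mul_of_pos_left h hγ
  have hd : γ * (1 - β/γ + β/γ * exp (-(γ*x))) = (γ - β) + β * exp (-(γ*x)) := by
    field_simp
  linarith [this, hd.le]

lemma numpos (β γ x : ℝ) (hβ : 0 < β) (hβγ : β < γ) (hx : x ≠ 0) :
    0 < β * exp (-(β*x)) * (1 - exp (-(γ*x))) - (1 - exp (-(β*x))) * (γ * exp (-(γ*x))) := by
  have h := core β γ (-x) hβ hβγ (neg_ne_zero.2 hx)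
  simp only [mul_neg, neg_neg] at h
  have e1 : exp (β*x) * exp (-(β*x)) = 1 := by rw [← exp_add]; simp
  have e2 : exp (γ*x) * exp (-(γ*x)) = 1 := by rw [← exp_add]; simp
  have e1q : exp (β*x) * exp (-(β*x)) * exp (-(γ*x)) = exp (-(γ*x)) := by rw [e1, one_mul]
  have e2p : exp (γ*x) * exp (-(γ*x)) * exp (-(β*x)) = exp (-(β*x)) := by rw [e2, one_mul]
  have h' := mul_lt_mul_of_pos_right h (mul_pos (exp_pos (-(β*x))) (exp_pos (-(γ*x))))
  nlinarith [h', e1q, e2p]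

lemma gderiv (β γ : ℝ) (hβ : 0 < β) (hγ : 0 < γ) (x : ℝ) (hx : x ≠ 0) :
    HasDerivAt (fun μ : ℝ => (1 - exp (-(β*μ))) / (1 - exp (-(γ*μ))))
      ((β * exp (-(β*x)) * (1 - exp (-(γ*x))) - (1 - exp (-(β*x))) * (γ * exp (-(γ*x))))
        / (1 - exp (-(γ*x)))^2) x := by
  have hden : 1 - exp (-(γ*x)) ≠ 0 := by
    intro h
    have : exp (-(γ*x)) = 1 := by linarith
    rw [exp_eq_one_iff] at this
    exact hx (by rcases mul_eq_zero.1 (neg_eq_zero.1 this) with h|h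
                 · exact absurd h hγ.ne'
                 · exact h)
  have hNf : ∀ c : ℝ, HasDerivAt (fun μ : ℝ => 1 - exp (-(c*μ))) (c * exp (-(c*x))) x := by
    intro c
    have h1 : HasDerivAt (fun μ : ℝ => -(c*μ)) (-c) x := by
      simpa using (hasDerivAt_neg' x).const_mul c
    have h2 := h1.exp
    have := (h2.const_sub 1)
    simpa [mul_comm] using this
  exact (hNf β).div (hNf γ) hden

lemma gmono (β γ : ℝ) (hβ : 0 < β) (hβγ : β < γ) :
    StrictMonoOn (fun μ : ℝ => (1 - exp (-(β*μ))) / (1 - exp (-(γ*μ)))) {(0:ℝ)}ᶜ := by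
  have hγ : 0 < γ := hβ.trans hβγ
  set g : ℝ → ℝ := fun μ => (1 - exp (-(β*μ))) / (1 - exp (-(γ*μ))) with hg
  have hden : ∀ x : ℝ, x ≠ 0 → 1 - exp (-(γ*x)) ≠ 0 := by
    intro x hx h
    have : exp (-(γ*x)) = 1 := by linarith
    rw [exp_eq_one_iff] at this
    rcases mul_eq_zero.1 (neg_eq_zero.1 this) with h|h
    · exact absurd h hγ.ne'
    · exact hx h
  have hcont : ∀ s : Set ℝ, (∀ x ∈ s, x ≠ (0:ℝ)) → ContinuousOn g s := by
    intro s hs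
    apply ContinuousOn.div
    · fun_prop
    · fun_prop
    · intro x hx; exact hden x (hs x hx)
  have hdpos : ∀ x : ℝ, x ≠ 0 → 0 < deriv g x := by
    intro x hx
    rw [(gderiv β γ hβ hγ x hx).deriv]
    apply div_pos (numpos β γ x hβ hβγ hx)
    exact pow_pos (abs_pos.2 (hden x hx)) 2 |>.trans_le (by rw [sq_abs])
  have hIio : StrictMonoOn g (Set.Iio 0) := by
    apply strictMonoOn_of_deriv_pos (convex_Iio 0) (hcont _ (fun x hx => ne_of_lt hx))
    intro x hx
    rw [interior_Iio] at hx
    exact hdpos x (ne_of_lt hx)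
  have hIoi : StrictMonoOn g (Set.Ioi 0) := by
    apply strictMonoOn_of_deriv_pos (convex_Ioi 0) (hcont _ (fun x hx => ne_of_gt hx))
    intro x hx
    rw [interior_Ioi] at hx
    exact hdpos x (ne_of_gt hx)
  have hexp1 : ∀ t : ℝ, 0 < t → 1 < exp t := by
    intro t ht
    simpa using Real.exp_lt_exp.2 ht
  have hexp2 : ∀ t : ℝ, t < 0 → exp t < 1 := by
    intro t ht
    simpa using Real.exp_lt_exp.2 ht
  have hneg : ∀ x : ℝ, x < 0 → g x < β/γ := by
    intro x hx
    have hN : 1 - exp (-(β*x)) < 0 := by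
      have := hexp1 (-(β*x)) (by nlinarith)
      linarith
    have hD : 1 - exp (-(γ*x)) < 0 := by
      have := hexp1 (-(γ*x)) (by nlinarith)
      linarith
    have hcore := core β γ x hβ hβγ (ne_of_lt hx)
    have heq : g x = (exp (-(β*x)) - 1) / (exp (-(γ*x)) - 1) := by
      rw [hg, ← neg_div_neg_eq]; ring_nf
    rw [heq, div_lt_div_iff₀ (by linarith) hγ]
    nlinarith
  have hpos : ∀ x : ℝ, 0 < x → β/γ < g x := by
    intro x hx
    have hN : 0 < 1 - exp (-(β*x)) := by
      have := hexp2 (-(β*x)) (by nlinarith)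
      linarith
    have hD : 0 < 1 - exp (-(γ*x)) := by
      have := hexp2 (-(γ*x)) (by nlinarith)
      linarith
    have hcore := core β γ x hβ hβγ (ne_of_gt hx)
    rw [hg]
    rw [div_lt_div_iff₀ hγ hD]
    nlinarith
  intro x hx y hy hxy
  simp only [Set.mem_compl_iff, Set.mem_singleton_iff] at hx hy
  rcases lt_or_gt_of_ne hx with hx0 | hx0
  · rcases lt_or_gt_of_ne hy with hy0 | hy0
    · exact hIio hx0 hy0 hxy
    · exact (hneg x hx0).trans (hpos y hy0)
  · have hy0 : 0 < y := hx0.trans hxy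
    exact hIoi hx0 hy0 hxy

lemma alg (P Q : ℝ) (hP : P ≠ 0) (hQ : Q ≠ 0) (h1 : P^2*Q^2 - 1 ≠ 0) :
    1 - Q⁻¹ * ((P - P⁻¹)/2 / ((P*Q - (P*Q)⁻¹)/2)) = (1 - (Q*Q)⁻¹) / (1 - (P*Q*(P*Q))⁻¹) := by
  have hPQ : P*Q - (P*Q)⁻¹ ≠ 0 := by
    rw [show P*Q - (P*Q)⁻¹ = (P^2*Q^2 - 1)/(P*Q) by field_simp]
    exact div_ne_zero h1 (mul_ne_zero hP hQ)
  have h2 : 1 - (P*Q*(P*Q))⁻¹ ≠ 0 := by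
    rw [show 1 - (P*Q*(P*Q))⁻¹ = (P^2*Q^2 - 1)/(P^2*Q^2) by field_simp]
    exact div_ne_zero h1 (by positivity)
  rw [show P*Q - (P*Q)⁻¹ = (P^2*Q^2 - 1)/(P*Q) by field_simp,
      show 1 - (P*Q*(P*Q))⁻¹ = (P^2*Q^2 - 1)/(P^2*Q^2) by field_simp,
      show 1 - (Q*Q)⁻¹ = (Q^2 - 1)/(Q^2) by field_simp,
      show (P - P⁻¹) = (P^2 - 1)/P by field_simp]
  have h1' : Q^2*P^2 - 1 ≠ 0 := by rw [mul_comm]; exact h1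
  field_simp
  ring

lemma feq (a b μ : ℝ) (ha : 0 < a) (hb : 0 < b) (hμ : μ ≠ 0) :
    1 - exp (-μ * b) * (Real.sinh (|μ| * a) / Real.sinh (|μ| * (a + b)))
      = (1 - exp (-(2*b*μ))) / (1 - exp (-(2*(a+b)*μ))) := by
  have hab : 0 < a + b := by linarith
  have hratio : Real.sinh (|μ| * a) / Real.sinh (|μ| * (a+b))
      = Real.sinh (μ*a) / Real.sinh (μ*(a+b)) := by
    rcases abs_choice μ with h | h
    · rw [h]
    · rw [h]; simp only [neg_mul, Real.sinh_neg, neg_div_neg_eq]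
  rw [hratio]
  have hs : Real.sinh (μ*(a+b)) ≠ 0 := by
    simp only [Ne, Real.sinh_eq_zero, mul_eq_zero, not_or]
    exact ⟨hμ, hab.ne'⟩
  have h2 : 1 - exp (-(2*(a+b)*μ)) ≠ 0 := by
    intro h
    have : exp (-(2*(a+b)*μ)) = 1 := by linarith
    rw [exp_eq_one_iff, neg_eq_zero, mul_eq_zero] at this
    rcases this with h' | h'
    · nlinarith
    · exact hμ h'
  have ea : exp (μ*(a+b)) = exp (μ*a) * exp (μ*b) := by
    rw [← exp_add]; ring_nf
  have eb : exp (-(μ*(a+b))) = (exp (μ*a) * exp (μ*b))⁻¹ := by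
    rw [exp_neg, ea]
  have ec : exp (-(2*b*μ)) = (exp (μ*b) * exp (μ*b))⁻¹ := by
    rw [show -(2*b*μ) = -(μ*b + μ*b) by ring, exp_neg, exp_add]
  have ed : exp (-(2*(a+b)*μ)) = (exp (μ*a) * exp (μ*b) * (exp (μ*a) * exp (μ*b)))⁻¹ := by
    rw [show -(2*(a+b)*μ) = -((μ*a + μ*b) + (μ*a + μ*b)) by ring, exp_neg, exp_add, exp_add]
  have e5 : exp (-μ * b) = (exp (μ*b))⁻¹ := by
    rw [show -μ * b = -(μ*b) by ring, exp_neg]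
  have e6 : exp (-(μ*a)) = (exp (μ*a))⁻¹ := exp_neg _
  rw [Real.sinh_eq, Real.sinh_eq, ea, eb, ec, ed, e5, e6]
  have hP := exp_ne_zero (μ*a)
  have hQ := exp_ne_zero (μ*b)
  have hkey : exp (μ*a)^2 * exp (μ*b)^2 - 1 ≠ 0 := by
    intro h
    apply h2
    rw [ed, show exp (μ*a) * exp (μ*b) * (exp (μ*a) * exp (μ*b))
          = exp (μ*a)^2 * exp (μ*b)^2 by ring,
        show exp (μ*a)^2 * exp (μ*b)^2 = 1 by linarith]
    simp
  exact alg _ _ hP hQ hkey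

/-- The Brownian hitting probability
`f(μ,a,b) = 1 − e^{−μb} sinh(|μ|a)/sinh(|μ|(a+b))` is (strictly) increasing in the
drift `μ` on `ℝ \ {0}`, for fixed `a, b > 0`. -/
theorem brownian_hitting_prob_mono (a b : ℝ) (ha : 0 < a) (hb : 0 < b) :
    StrictMonoOn
      (fun μ : ℝ =>
        1 - Real.exp (-μ * b) * (Real.sinh (|μ| * a) / Real.sinh (|μ| * (a + b))))
      {(0 : ℝ)}ᶜ := by
  have h := gmono (2*b) (2*(a+b)) (by linarith) (by linarith)
  intro x hx y hy hxy
  have hx' : x ≠ 0 := by simpa using hx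
  have hy' : y ≠ 0 := by simpa using hy
  simp only []
  rw [feq a b x ha hb hx', feq a b y ha hb hy']
  exact h hx hy hxy
end

section
/- FCR control of the e-BY procedure implies FDR control of the e-BH procedure at level δ under arbitrary dependence: if E_1,...,E_K are nonnegative random variables such that E[E_i] ≤ 1 whenever the i-th null hypothesis H_i^0 is true, and the e-BH rejection set R consists of the indices of the k* largest e-values where k* = max{k : E_{(k)} ≥ K/(δk)} (E_{(1)} ≥ ... ≥ E_{(K)} are the sorted e-values, k*=0 if the set is empty), then E[ (Σ_{i∈R} 1{H_i^0 true}) / max(|R|,1) ] ≤ δ. -/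
open MeasureTheory ENNReal
open scoped ENNReal Classical

/-- The e-BH threshold: `k* = max {k ≤ K : at least k of the e-values are ≥ K/(δk)}`,
an equivalent formulation of `max {k : E_{(k)} ≥ K/(δk)}` for the sorted e-values
(with `k* = 0` if the set is empty; note `0` always belongs to the defining set). -/
noncomputable def eBHkstar (K : ℕ) (δ : ℝ≥0∞) (e : Fin K → ℝ≥0∞) : ℕ :=
  sSup {k | k ≤ K ∧
    k ≤ (Finset.univ.filter fun i => (K : ℝ≥0∞) / (δ * (k : ℝ≥0∞)) ≤ e i).card}

/-- The e-BH rejection set: the indices whose e-value is at least `K/(δ k*)`,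
i.e. the indices of the `k*` largest e-values. -/
noncomputable def eBHrej (K : ℕ) (δ : ℝ≥0∞) (e : Fin K → ℝ≥0∞) : Finset (Fin K) :=
  Finset.univ.filter fun i => (K : ℝ≥0∞) / (δ * (eBHkstar K δ e : ℝ≥0∞)) ≤ e i

lemma eBH_key {K : ℕ} (hK : 0 < K) {δ : ℝ≥0∞} (hδ0 : 0 < δ) (hδ1 : δ < 1)
    (e : Fin K → ℝ≥0∞) {i : Fin K} (hi : i ∈ eBHrej K δ e) :
    (max ((eBHrej K δ e).card : ℝ≥0∞) 1)⁻¹ ≤ δ * e i / K := by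
  set S : Set ℕ := {k | k ≤ K ∧
    k ≤ (Finset.univ.filter fun j => (K : ℝ≥0∞) / (δ * (k : ℝ≥0∞)) ≤ e j).card} with hS
  have hbdd : BddAbove S := ⟨K, fun x hx => hx.1⟩
  have h0S : 0 ∈ S := ⟨Nat.zero_le _, Nat.zero_le _⟩
  have hkmem : eBHkstar K δ e ∈ S := Nat.sSup_mem ⟨0, h0S⟩ hbdd
  set k := eBHkstar K δ e with hk
  have hsup : sSup S = k := rfl
  have hiR : (K : ℝ≥0∞) / (δ * (k : ℝ≥0∞)) ≤ e i := (Finset.mem_filter.mp hi).2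
  -- k ≥ 1
  have hk1 : 1 ≤ k := by
    by_contra h
    have hk0 : k = 0 := by omega
    have hei : e i = ⊤ := by
      rw [hk0] at hiR
      simp only [Nat.cast_zero, mul_zero, ENNReal.div_zero (by exact_mod_cast hK.ne' : (K:ℝ≥0∞) ≠ 0)] at hiR
      exact top_le_iff.mp hiR
    have h1S : 1 ∈ S := by
      refine ⟨hK, ?_⟩
      have : i ∈ Finset.univ.filter fun j => (K : ℝ≥0∞) / (δ * ((1:ℕ) : ℝ≥0∞)) ≤ e j := by
        simp [hei]
      exact Finset.card_pos.mpr ⟨i, this⟩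
    have := le_csSup hbdd h1S
    rw [hsup] at this
    omega
  -- card bound
  have hcardk : k ≤ (eBHrej K δ e).card := hkmem.2
  have hcard1 : 1 ≤ (eBHrej K δ e).card := le_trans hk1 hcardk
  have hcardK : (eBHrej K δ e).card ≤ K := by
    rw [eBHrej]
    exact (Finset.card_le_card (Finset.filter_subset _ _)).trans (by simp)
  set c : ℝ≥0∞ := ((eBHrej K δ e).card : ℝ≥0∞) with hc
  have hc0 : c ≠ 0 := by
    rw [hc]
    exact_mod_cast Nat.pos_iff_ne_zero.mp (by omega)
  have hctop : c ≠ ⊤ := by simp [hc]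
  have hmax : max c 1 = c := max_eq_left (by rw [hc]; exact_mod_cast hcard1)
  rw [hmax]
  -- K/(δ c) ≤ e i since k ≤ card
  have hle : (K : ℝ≥0∞) / (δ * c) ≤ e i := by
    refine le_trans (ENNReal.div_le_div_left ?_ _) hiR
    exact mul_le_mul_right (by rw [hc]; exact_mod_cast hcardk) δ
  have hδc0 : δ * c ≠ 0 := by
    simp [hδ0.ne', hc0]
  have hδctop : δ * c ≠ ⊤ := ENNReal.mul_ne_top (ne_top_of_lt hδ1) hctop
  have hKc : (K : ℝ≥0∞) ≤ e i * (δ * c) := (ENNReal.div_le_iff hδc0 hδctop).mp hle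
  rw [ENNReal.le_div_iff_mul_le (Or.inl (by exact_mod_cast hK.ne')) (Or.inl (by simp))]
  calc c⁻¹ * (K : ℝ≥0∞) ≤ c⁻¹ * (e i * (δ * c)) := mul_le_mul_right hKc _
    _ = (c⁻¹ * c) * (δ * e i) := by ring
    _ = δ * e i := by rw [ENNReal.inv_mul_cancel hc0 hctop, one_mul]

/-- FCR control of e-BY implies FDR control of e-BH at level δ under arbitrary
dependence: if `E[E_i] ≤ 1` whenever the i-th null hypothesis is true, then the
expected proportion of true nulls among the e-BH rejections is at most `δ`. -/
theorem eBH_FDR_control {Ω : Type*} [MeasurableSpace Ω]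
    (μ : Measure Ω) [IsProbabilityMeasure μ]
    (K : ℕ) (hK : 0 < K)
    (δ : ℝ≥0∞) (hδ0 : 0 < δ) (hδ1 : δ < 1)
    (E : Fin K → Ω → ℝ≥0∞) (hmeas : ∀ i, Measurable (E i))
    (isNull : Fin K → Prop)
    (hE : ∀ i, isNull i → ∫⁻ ω, E i ω ∂μ ≤ 1) :
    ∫⁻ ω, (∑ i ∈ eBHrej K δ (fun i => E i ω), if isNull i then (1 : ℝ≥0∞) else 0)
        / max ((eBHrej K δ (fun i => E i ω)).card : ℝ≥0∞) 1 ∂μ ≤ δ := by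
  have hpt : ∀ ω, (∑ i ∈ eBHrej K δ (fun i => E i ω), if isNull i then (1 : ℝ≥0∞) else 0)
      / max ((eBHrej K δ (fun i => E i ω)).card : ℝ≥0∞) 1
      ≤ ∑ i : Fin K, (if isNull i then δ * E i ω / K else 0) := by
    intro ω
    set R := eBHrej K δ (fun i => E i ω) with hR
    set M : ℝ≥0∞ := max ((R.card : ℝ≥0∞)) 1 with hM
    rw [div_eq_mul_inv, Finset.sum_mul]
    calc ∑ i ∈ R, (if isNull i then (1:ℝ≥0∞) else 0) * M⁻¹
        ≤ ∑ i ∈ R, (if isNull i then δ * E i ω / K else 0) := by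
          refine Finset.sum_le_sum fun i hi => ?_
          by_cases h : isNull i
          · simp only [h, if_true, one_mul]
            exact eBH_key hK hδ0 hδ1 _ hi
          · simp [h]
      _ ≤ ∑ i : Fin K, (if isNull i then δ * E i ω / K else 0) :=
          Finset.sum_le_sum_of_subset (Finset.subset_univ R)
  calc ∫⁻ ω, (∑ i ∈ eBHrej K δ (fun i => E i ω), if isNull i then (1 : ℝ≥0∞) else 0)
        / max ((eBHrej K δ (fun i => E i ω)).card : ℝ≥0∞) 1 ∂μ
      ≤ ∫⁻ ω, ∑ i : Fin K, (if isNull i then δ * E i ω / K else 0) ∂μ :=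
        lintegral_mono hpt
    _ = ∑ i : Fin K, ∫⁻ ω, (if isNull i then δ * E i ω / K else 0) ∂μ := by
        refine lintegral_finset_sum _ fun i _ => ?_
        by_cases h : isNull i
        · simp only [h, if_true]
          exact ((hmeas i).const_mul δ).div_const _
        · simp [h]
    _ ≤ ∑ i : Fin K, δ / K := by
        refine Finset.sum_le_sum fun i _ => ?_
        by_cases h : isNull i
        · simp only [h, if_true]
          have heq : (fun ω => δ * E i ω / K) = fun ω => (δ / K) * E i ω := by
            funext ω
            rw [div_eq_mul_inv, div_eq_mul_inv, mul_assoc, mul_comm (E i ω), ← mul_assoc]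
          rw [heq, lintegral_const_mul _ (hmeas i)]
          calc δ / K * ∫⁻ ω, E i ω ∂μ ≤ δ / K * 1 := mul_le_mul_right (hE i h) _
            _ = δ / K := mul_one _
        · simp [h]
    _ = δ := by
        rw [Finset.sum_const, Finset.card_univ, Fintype.card_fin, nsmul_eq_mul]
        exact ENNReal.mul_div_cancel (by exact_mod_cast hK.ne') (by simp)
end

section
/- Suppose E(θ) = t(θ)·1{U_S < 1/(t(θ) ∨ t_S)} + r·1{1/t_S ≤ U_S < (1+ℓ(θ))/t_S}·1{t(θ) < t_S}, where ℓ(θ) = (t_S − t(θ))/r, t_S ≥ r > 0, t(θ) ≥ 1, and under parameter θ the random variable U_S satisfies P(U_S < s) = s for all s ∈ [0,1]. Then E(θ) ≥ 0 and E_θ[E(θ)] ≤ 1. -/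
open MeasureTheory
open scoped Classical

/-- The sophisticated e-value from the admissibility proof:
`E = t·1{U < 1/(t ∨ t_S)} + r·1{1/t_S ≤ U < (1+ℓ)/t_S}·1{t < t_S}` with
`ℓ = (t_S − t)/r`, where `t ≥ 1`, `t_S ≥ r > 0`, `(1+ℓ)/t_S ≤ 1`, and `U` is standard
uniform.  Then `E` is nonnegative and has expectation at most 1. -/
theorem sophisticated_evalue {Ω : Type*} [MeasurableSpace Ω]
    (μ : Measure Ω) [IsProbabilityMeasure μ]
    (U : Ω → ℝ) (hU : Measurable U)
    (hUnif : ∀ s ∈ Set.Icc (0 : ℝ) 1, μ {ω | U ω < s} = ENNReal.ofReal s)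
    (t tS r : ℝ) (ht : 1 ≤ t) (hr : 0 < r) (hrtS : r ≤ tS)
    (hℓ : (1 + (tS - t) / r) / tS ≤ 1) :
    (∀ ω, 0 ≤ t * (if U ω < 1 / max t tS then 1 else 0)
        + r * (if 1 / tS ≤ U ω ∧ U ω < (1 + (tS - t) / r) / tS then 1 else 0)
            * (if t < tS then 1 else 0)) ∧
    ∫ ω, (t * (if U ω < 1 / max t tS then 1 else 0)
        + r * (if 1 / tS ≤ U ω ∧ U ω < (1 + (tS - t) / r) / tS then 1 else 0)
            * (if t < tS then 1 else 0)) ∂μ ≤ 1 := by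
  have htS : 0 < tS := lt_of_lt_of_le hr hrtS
  constructor
  · intro ω
    split_ifs <;> nlinarith
  · set c1 : ℝ := 1 / max t tS with hc1
    set a : ℝ := 1 / tS with ha
    set b : ℝ := (1 + (tS - t) / r) / tS with hb
    have hSA : MeasurableSet (U ⁻¹' Set.Iio c1) := hU measurableSet_Iio
    have hSB : MeasurableSet (U ⁻¹' Set.Ico a b) := hU measurableSet_Ico
    have hmemA : μ (U ⁻¹' Set.Iio c1) = ENNReal.ofReal c1 := by
      have hmax : (1:ℝ) ≤ max t tS := le_trans ht (le_max_left _ _)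
      have : c1 ∈ Set.Icc (0:ℝ) 1 := by
        constructor
        · positivity
        · rw [hc1, div_le_one (by linarith)]; linarith
      simpa [Set.preimage, Set.Iio] using hUnif c1 this
    by_cases hts : t < tS
    · -- case t < tS
      have hmax : max t tS = tS := max_eq_right (le_of_lt hts)
      have hab : a ≤ b := by
        rw [ha, hb]
        exact (div_le_div_iff_of_pos_right htS).mpr
          (by nlinarith [div_nonneg (by linarith : (0:ℝ) ≤ tS - t) hr.le])
      have hbmem : b ∈ Set.Icc (0:ℝ) 1 := by
        constructor
        · have : (0:ℝ) ≤ (tS - t)/r := div_nonneg (by linarith) hr.le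
          positivity
        · exact hℓ
      have hamem : a ∈ Set.Icc (0:ℝ) 1 := by
        constructor
        · positivity
        · rw [ha, div_le_one htS]; linarith
      have hμb : μ (U ⁻¹' Set.Iio b) = ENNReal.ofReal b := by
        simpa [Set.preimage, Set.Iio] using hUnif b hbmem
      have hμa : μ (U ⁻¹' Set.Iio a) = ENNReal.ofReal a := by
        simpa [Set.preimage, Set.Iio] using hUnif a hamem
      have hsplit : μ (U ⁻¹' Set.Iio a) + μ (U ⁻¹' Set.Ico a b) = ENNReal.ofReal b := by
        rw [← hμb, ← measure_union _ hSB]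
        · rw [← Set.preimage_union, Set.Iio_union_Ico_eq_Iio hab]
        · exact (((Set.Iio_disjoint_Ici le_rfl).mono_right Set.Ico_subset_Ici_self).preimage U)
      have hμB : (μ (U ⁻¹' Set.Ico a b)).toReal = b - a := by
        have h1 : (μ (U ⁻¹' Set.Iio a) + μ (U ⁻¹' Set.Ico a b)).toReal = b := by
          rw [hsplit, ENNReal.toReal_ofReal (hbmem.1)]
        rw [ENNReal.toReal_add (measure_ne_top _ _) (measure_ne_top _ _), hμa,
          ENNReal.toReal_ofReal hamem.1] at h1
        linarith
      have key : ∀ ω, (t * (if U ω < c1 then 1 else 0)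
          + r * (if a ≤ U ω ∧ U ω < b then 1 else 0) * (if t < tS then 1 else 0))
          = (U ⁻¹' Set.Iio c1).indicator (fun _ => t) ω
            + (U ⁻¹' Set.Ico a b).indicator (fun _ => r) ω := by
        intro ω
        simp [Set.indicator_apply, Set.mem_Iio, Set.mem_Ico, hts, mul_ite]
      rw [integral_congr_ae (Filter.Eventually.of_forall key),
        integral_add ((integrable_const t).indicator hSA) ((integrable_const r).indicator hSB),
        integral_indicator_const _ hSA, integral_indicator_const _ hSB,
        measureReal_def, hmemA, measureReal_def, hμB, ENNReal.toReal_ofReal]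
      · have hc1' : c1 = 1 / tS := by rw [hc1, hmax]
        rw [hc1', hb, ha]
        have hr' : r ≠ 0 := ne_of_gt hr
        have htS' : tS ≠ 0 := ne_of_gt htS
        have heq : t * (1 / tS) + r * ((1 + (tS - t) / r) / tS - 1 / tS) = 1 := by
          field_simp
          ring
        simp only [smul_eq_mul]
        ring_nf
        ring_nf at heq
        linarith
      · have : (1:ℝ) ≤ max t tS := le_trans ht (le_max_left _ _)
        positivity
    · -- case t ≥ tS
      have hmax : max t tS = t := max_eq_left (le_of_not_gt hts)
      have key : ∀ ω, (t * (if U ω < c1 then 1 else 0)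
          + r * (if a ≤ U ω ∧ U ω < b then 1 else 0) * (if t < tS then 1 else 0))
          = (U ⁻¹' Set.Iio c1).indicator (fun _ => t) ω := by
        intro ω
        simp [Set.indicator_apply, Set.mem_Iio, hts, mul_ite]
      rw [integral_congr_ae (Filter.Eventually.of_forall key),
        integral_indicator_const _ hSA, measureReal_def, hmemA, ENNReal.toReal_ofReal]
      · rw [hc1, hmax]
        have ht' : t ≠ 0 := by positivity
        rw [smul_eq_mul, one_div_mul_cancel ht']
      · have : (1:ℝ) ≤ max t tS := le_trans ht (le_max_left _ _)
        positivity
end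

section
/- Let δ ∈ (0,1), K ≥ 2, and ℓ_K = Σ_{k=1}^K 1/k. For a selection size s ∈ [1,K], the inequality log(2/δ) + log(2K/(δs)) ≤ 2·sqrt( log(2/δ)·log(2Kℓ_K/(δs)) ) holds if and only if log s ∈ [ log K − 2·sqrt(log(2/δ)·log ℓ_K), log K + 2·sqrt(log(2/δ)·log ℓ_K) ]. Consequently, since s ≤ K, the inequality holds iff s ≥ K / exp(2·sqrt(log(2/δ)·log ℓ_K)). -/
/-!
Write `L = log (2/δ)`, `c = log ℓ_K` and `A = log K - log s ≥ 0`. Then the two logarithms in the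
inequality are `L + A` and `L + A + c`, and since both sides are nonnegative, squaring turns
`2L + A ≤ 2√(L (L + A + c))` into `A² ≤ 4 L c`: the terms `4L² + 4LA` cancel. As `ℓ_K ≥ 3/2 > 1`,
this says `|log K - log s| ≤ 2√(L c)`, and exponentiating gives the bound on `s`.
-/

open Real

lemma one_lt_sum_range_one_div_succ {K : ℕ} (hK : 2 ≤ K) :
    1 < ∑ k ∈ Finset.range K, (1 : ℝ) / (k + 1) :=
  calc (1 : ℝ) < ∑ k ∈ Finset.range 2, (1 : ℝ) / (k + 1) := by norm_num [Finset.sum_range_succ]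
    _ ≤ _ := Finset.sum_le_sum_of_subset_of_nonneg (Finset.range_subset_range.2 hK)
      fun _ _ _ => by positivity

lemma log_mul_div_mul {a b c d : ℝ} (ha : a ≠ 0) (hb : b ≠ 0) (hc : c ≠ 0) (hd : d ≠ 0) :
    log (a * b / (c * d)) = log (a / c) + (log b - log d) := by
  rw [log_div (mul_ne_zero ha hb) (mul_ne_zero hc hd), log_mul ha hb, log_mul hc hd,
    log_div ha hc]
  ring

lemma le_two_mul_sqrt_iff {a x : ℝ} (ha : 0 ≤ a) (hx : 0 ≤ x) :
    a ≤ 2 * √x ↔ a ^ 2 ≤ 4 * x := by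
  have h2 : 2 * √x = √(4 * x) := by
    rw [sqrt_mul' _ hx, show (4 : ℝ) = 2 ^ 2 by norm_num, sqrt_sq zero_le_two]
  rw [h2, le_sqrt ha (by positivity)]

lemma add_add_le_two_mul_sqrt_iff {L A c : ℝ} (hL : 0 ≤ L) (hA : 0 ≤ A) (hc : 0 ≤ c) :
    L + (L + A) ≤ 2 * √(L * (L + A + c)) ↔ A ≤ 2 * √(L * c) := by
  rw [le_two_mul_sqrt_iff (by positivity) (by positivity),
    le_two_mul_sqrt_iff hA (by positivity), ← sub_nonneg,
    show 4 * (L * (L + A + c)) - (L + (L + A)) ^ 2 = 4 * (L * c) - A ^ 2 by ring, sub_nonneg]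

lemma div_exp_le_iff {x y r : ℝ} (hx : 0 < x) (hy : 0 < y) :
    x / exp r ≤ y ↔ log x - log y ≤ r := by
  rw [div_le_iff₀ (exp_pos r), ← log_le_log_iff hx (by positivity),
    log_mul hy.ne' (exp_pos r).ne', log_exp, sub_le_iff_le_add']

/-- Comparison of the Hoeffding e-CI (used with e-BY at level `δ s / K`) and the
standard Hoeffding CI (used with BY at level `δ s /(K ℓ_K)`): for `s ∈ [1,K]`,
`log(2/δ) + log(2K/(δs)) ≤ 2√(log(2/δ)·log(2Kℓ_K/(δs)))` holds iff
`log s ∈ [log K − 2√(log(2/δ)·log ℓ_K), log K + 2√(log(2/δ)·log ℓ_K)]`, and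
(since `s ≤ K`) iff `s ≥ K / exp(2√(log(2/δ)·log ℓ_K))`. -/
theorem hoeffding_eCI_comparison (K : ℕ) (hK : 2 ≤ K)
    (δ : ℝ) (hδ0 : 0 < δ) (hδ1 : δ < 1)
    (lK : ℝ) (hlK : lK = ∑ k ∈ Finset.range K, (1 : ℝ) / (k + 1))
    (s : ℝ) (hs1 : 1 ≤ s) (hsK : s ≤ K) :
    (Real.log (2 / δ) + Real.log (2 * K / (δ * s)) ≤
        2 * Real.sqrt (Real.log (2 / δ) * Real.log (2 * K * lK / (δ * s)))
      ↔ Real.log s ∈ Set.Icc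
          (Real.log K - 2 * Real.sqrt (Real.log (2 / δ) * Real.log lK))
          (Real.log K + 2 * Real.sqrt (Real.log (2 / δ) * Real.log lK))) ∧
    (Real.log (2 / δ) + Real.log (2 * K / (δ * s)) ≤
        2 * Real.sqrt (Real.log (2 / δ) * Real.log (2 * K * lK / (δ * s)))
      ↔ (K : ℝ) / Real.exp (2 * Real.sqrt (Real.log (2 / δ) * Real.log lK)) ≤ s) := by
  have hs : 0 < s := by linarith
  have hK0 : (0 : ℝ) < K := by positivity
  have hlK1 : 1 < lK := hlK ▸ one_lt_sum_range_one_div_succ hK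
  have hL : 0 < log (2 / δ) := log_pos (by rw [lt_div_iff₀ hδ0]; linarith)
  have hA : 0 ≤ log K - log s := sub_nonneg.2 (log_le_log hs hsK)
  have hlog₁ : log (2 * K / (δ * s)) = log (2 / δ) + (log K - log s) :=
    log_mul_div_mul two_ne_zero hK0.ne' hδ0.ne' hs.ne'
  have hlog₂ : log (2 * K * lK / (δ * s)) = log (2 / δ) + (log K - log s) + log lK := by
    rw [mul_assoc, log_mul_div_mul two_ne_zero (by positivity) hδ0.ne' hs.ne',
      log_mul hK0.ne' (by positivity)]
    ring
  rw [hlog₁, hlog₂, add_add_le_two_mul_sqrt_iff hL.le hA (log_pos hlK1).le,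
    div_exp_le_iff hK0 hs, ← Set.mem_Icc_iff_abs_le, abs_of_nonneg hA]
  exact ⟨Iff.rfl, Iff.rfl⟩
end
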